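/- A totally positive algebraic d-number α = 3^a (u₁^b u₂^c)² β^d (with a ≥ 0, b,c ∈ Z, d ∈ {0,1,2}) is a perfect square in Q(ζ₉)⁺ if and only if a ≡ d (mod 2). -/

import Mathlib

noncomputable section

/-- `ζ₉ = exp(2πi/9)`. -/
def z9 : ℂ := Complex.exp (2 * Real.pi * Complex.I / 9)

/-- The totally real cubic field `Q(ζ₉)⁺ = Q(2cos(π/9))`, as a subfield of `ℂ`. -/
def Kplus : IntermediateField ℚ ℂ :=
  IntermediateField.adjoin ℚ {((2 * Real.cos (Real.pi / 9) : ℝ) : ℂ)}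

def u1 : ℂ := z9 - z9 ^ 2 - z9 ^ 5

def u2 : ℂ := 1 - z9 ^ 4 - z9 ^ 5

/-!
The relation `β³ = 3 (u₁u₂)²` gives `3β = (β² / (u₁u₂))²`, so `β` and `3` have the same class
modulo squares and `α` is a square iff `3 ^ (a + d)` is. The minimal polynomial of `2 cos(π/9)`
is `X³ - 3X - 1` (irreducible already modulo 2), so `[Q(ζ₉)⁺ : Q] = 3` is odd and `√3`, of degree 2,
cannot lie in `Q(ζ₉)⁺`; hence `α` is a square iff `a + d` is even.
-/

open Polynomial

section SquareClasses

variable {G₀ : Type*} [CommGroupWithZero G₀]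

theorem isSquare_mul_iff_of_isSquare_right {a b : G₀} (hb : IsSquare b) (hb₀ : b ≠ 0) :
    IsSquare (a * b) ↔ IsSquare a :=
  ⟨fun hab => by simpa [hb₀] using hab.div hb, fun ha => ha.mul hb⟩

theorem isSquare_pow_iff_even {t : G₀} (ht : ¬IsSquare t) {n : ℕ} :
    IsSquare (t ^ n) ↔ Even n := by
  have ht₀ : t ≠ 0 := by rintro rfl; exact ht IsSquare.zero
  obtain ⟨k, rfl | rfl⟩ := n.even_or_odd'
  · exact iff_of_true ((even_two_mul k).isSquare_pow t) (even_two_mul k)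
  · rw [pow_succ', pow_mul, isSquare_mul_iff_of_isSquare_right (IsSquare.pow k ⟨t, sq t⟩)
      (pow_ne_zero _ (pow_ne_zero _ ht₀))]
    simp [ht]

end SquareClasses

theorem isSquare_pow_mul_sq_mul_pow_iff {K : Type*} [Field K] {t β v w : K} (ht : ¬IsSquare t)
    (hβ : β ^ 3 = t * v ^ 2) (hv : v ≠ 0) (hw : w ≠ 0) (a d : ℕ) :
    IsSquare (t ^ a * w ^ 2 * β ^ d) ↔ a % 2 = d % 2 := by
  have ht₀ : t ≠ 0 := by rintro rfl; exact ht IsSquare.zero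
  have hβ₀ : β ≠ 0 := by
    rintro rfl
    simp [ht₀, hv] at hβ
  have htβ : t * β = (β ^ 2 / v) ^ 2 := by
    rw [div_pow, eq_div_iff (pow_ne_zero 2 hv)]
    linear_combination (-β) * hβ
  calc IsSquare (t ^ a * w ^ 2 * β ^ d)
      ↔ IsSquare (t ^ a * β ^ d) := by
        rw [mul_right_comm, isSquare_mul_iff_of_isSquare_right (IsSquare.sq w) (pow_ne_zero _ hw)]
    _ ↔ IsSquare (t ^ a * β ^ d * (t * β) ^ d) :=
        (isSquare_mul_iff_of_isSquare_right (htβ ▸ (IsSquare.sq _).pow d)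
          (pow_ne_zero _ (mul_ne_zero ht₀ hβ₀))).symm
    _ ↔ IsSquare (t ^ (a + d) * (β ^ d) ^ 2) := by
        rw [show t ^ a * β ^ d * (t * β) ^ d = t ^ (a + d) * (β ^ d) ^ 2 by ring]
    _ ↔ Even (a + d) := by
        rw [isSquare_mul_iff_of_isSquare_right (IsSquare.sq _)
          (pow_ne_zero 2 (pow_ne_zero d hβ₀)), isSquare_pow_iff_even ht]
    _ ↔ a % 2 = d % 2 := by rw [Nat.even_add, Nat.even_iff, Nat.even_iff]; omega

theorem not_isSquare_algebraMap_of_odd_finrank {F K : Type*} [Field F] [Field K] [Algebra F K]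
    (hK : Odd (Module.finrank F K)) {q : F} (hq : ¬IsSquare q) :
    ¬IsSquare (algebraMap F K q) := by
  rintro ⟨x, hx⟩
  have : FiniteDimensional F K := Module.finite_of_finrank_pos hK.pos
  have hx_int : IsIntegral F x := .of_finite F x
  have hdvd : minpoly F x ∣ X ^ 2 - C q :=
    minpoly.dvd F x (by simp [hx, sq])
  have hle : (minpoly F x).natDegree ≤ 2 :=
    (natDegree_le_of_dvd hdvd (X_pow_sub_C_ne_zero two_pos q)).trans (natDegree_X_pow_sub_C).le
  have hne : (minpoly F x).natDegree ≠ 2 := fun h2 =>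
    (Nat.not_even_iff_odd.mpr hK) (even_iff_two_dvd.mpr (h2 ▸ minpoly.degree_dvd hx_int))
  have hpos := minpoly.natDegree_pos hx_int
  have h1 : (minpoly F x).natDegree = 1 := by omega
  obtain ⟨y, rfl⟩ := minpoly.natDegree_eq_one_iff.mp h1
  exact hq ⟨y, (algebraMap F K).injective (by simpa using hx)⟩

theorem monic_X_pow_three_sub_three_mul_X_sub_one {R : Type*} [CommRing R] [Nontrivial R] :
    (X ^ 3 - 3 * X - 1 : R[X]).Monic := by
  monicity!

theorem irreducible_X_pow_three_sub_three_mul_X_sub_one :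
    Irreducible (X ^ 3 - 3 * X - 1 : ℚ[X]) := by
  have hmonic : (X ^ 3 - 3 * X - 1 : ℤ[X]).Monic := monic_X_pow_three_sub_three_mul_X_sub_one
  have hmod2 : (X ^ 3 - 3 * X - 1 : ℤ[X]).map (Int.castRingHom (ZMod 2)) = X ^ 3 + X + 1 := by
    simp only [Polynomial.map_sub, Polynomial.map_mul, Polynomial.map_pow, Polynomial.map_X,
      Polynomial.map_ofNat, Polynomial.map_one]
    linear_combination (-2 * X - 1) * (CharTwo.two_eq_zero : (2 : (ZMod 2)[X]) = 0)
  have hirr2 : Irreducible (X ^ 3 + X + 1 : (ZMod 2)[X]) := by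
    refine irreducible_of_degree_le_three_of_not_isRoot ?_ fun x => ?_
    · rw [show (X ^ 3 + X + 1 : (ZMod 2)[X]).natDegree = 3 by compute_degree!]; decide
    · simp only [IsRoot.def, eval_add, eval_pow, eval_X, eval_one]; fin_cases x <;> decide
  simpa using (hmonic.irreducible_iff_irreducible_map_fraction_map (K := ℚ)).mp
    (hmonic.irreducible_of_irreducible_map _ _ (hmod2 ▸ hirr2))

theorem two_cos_pi_div_nine_cubic :
    (2 * Real.cos (Real.pi / 9)) ^ 3 - 3 * (2 * Real.cos (Real.pi / 9)) - 1 = 0 := by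
  have h := Real.cos_three_mul (Real.pi / 9)
  rw [show 3 * (Real.pi / 9) = Real.pi / 3 by ring, Real.cos_pi_div_three] at h
  linear_combination -2 * h

theorem minpoly_two_cos_pi_div_nine :
    minpoly ℚ ((2 * Real.cos (Real.pi / 9) : ℝ) : ℂ) = X ^ 3 - 3 * X - 1 := by
  refine (minpoly.eq_of_irreducible_of_monic irreducible_X_pow_three_sub_three_mul_X_sub_one
    ?_ monic_X_pow_three_sub_three_mul_X_sub_one).symm
  simp only [map_sub, map_mul, map_pow, aeval_X, map_ofNat, map_one]
  exact_mod_cast two_cos_pi_div_nine_cubic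

theorem finrank_Kplus : Module.finrank ℚ Kplus = 3 := by
  have hint : IsIntegral ℚ ((2 * Real.cos (Real.pi / 9) : ℝ) : ℂ) :=
    minpoly.ne_zero_iff.mp <| by
      rw [minpoly_two_cos_pi_div_nine]
      exact monic_X_pow_three_sub_three_mul_X_sub_one.ne_zero
  rw [Kplus, IntermediateField.adjoin.finrank hint, minpoly_two_cos_pi_div_nine]
  compute_degree!

theorem not_isSquare_three_Kplus : ¬IsSquare (3 : Kplus) := by
  simpa using not_isSquare_algebraMap_of_odd_finrank (F := ℚ) (K := Kplus)
    (by rw [finrank_Kplus]; decide) (q := 3) (by norm_num)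

theorem z9_isPrimitiveRoot : IsPrimitiveRoot z9 9 := by
  simpa [z9] using Complex.isPrimitiveRoot_exp 9 (by norm_num)

theorem z9_pow_six_add_pow_three_add_one : z9 ^ 6 + z9 ^ 3 + 1 = 0 := by
  have h := (z9_isPrimitiveRoot.pow (by norm_num) (by norm_num : 9 = 3 * 3)).geom_sum_eq_zero
    (by norm_num)
  simp only [Finset.sum_range_succ, Finset.sum_range_zero] at h
  linear_combination h

theorem u1_ne_zero : u1 ≠ 0 :=
  left_ne_zero_of_mul_eq_one (b := 1 + z9 - z9 ^ 2 + z9 ^ 4) <| by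
    unfold u1
    linear_combination (-1 + z9 - z9 ^ 3) * z9_pow_six_add_pow_three_add_one

theorem u2_ne_zero : u2 ≠ 0 :=
  left_ne_zero_of_mul_eq_one (b := -z9 + z9 ^ 2 - z9 ^ 4) <| by
    unfold u2
    linear_combination (-1 - z9 + z9 ^ 2 + z9 ^ 3) * z9_pow_six_add_pow_three_add_one

theorem two_sub_z9_pow_four_sub_z9_pow_five_pow_three :
    (2 - z9 ^ 4 - z9 ^ 5) ^ 3 = 3 * (u1 * u2) ^ 2 := by
  unfold u1 u2
  -- the cofactor is the exact quotient of the difference of the two sides by `ζ₉⁶ + ζ₉³ + 1`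
  linear_combination (8 - 3 * z9 ^ 2 - 2 * z9 ^ 3 - 15 * z9 ^ 4 - 9 * z9 ^ 5 + 6 * z9 ^ 6
    + 3 * z9 ^ 7 + 12 * z9 ^ 8 + 14 * z9 ^ 9 - 3 * z9 ^ 11 - 3 * z9 ^ 12 - 6 * z9 ^ 13
    - 3 * z9 ^ 14) * z9_pow_six_add_pow_three_add_one

theorem stmt14_general (U1 U2 B : Kplus)
    (hU1 : (U1 : ℂ) = u1) (hU2 : (U2 : ℂ) = u2)
    (hB : (B : ℂ) = 2 - z9 ^ 4 - z9 ^ 5)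
    (a : ℕ) (b c : ℤ) (d : ℕ) :
    (∃ x : Kplus, x ^ 2 = 3 ^ a * (U1 ^ b * U2 ^ c) ^ 2 * B ^ d) ↔ a % 2 = d % 2 := by
  have hU1_ne : U1 ≠ 0 := fun h => u1_ne_zero (by rw [← hU1, h, ZeroMemClass.coe_zero])
  have hU2_ne : U2 ≠ 0 := fun h => u2_ne_zero (by rw [← hU2, h, ZeroMemClass.coe_zero])
  have hB_cube : B ^ 3 = 3 * (U1 * U2) ^ 2 := by
    apply Subtype.val_injective
    push_cast [hB, hU1, hU2]
    exact two_sub_z9_pow_four_sub_z9_pow_five_pow_three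
  rw [← isSquare_pow_mul_sq_mul_pow_iff not_isSquare_three_Kplus hB_cube
    (mul_ne_zero hU1_ne hU2_ne) (mul_ne_zero (zpow_ne_zero b hU1_ne) (zpow_ne_zero c hU2_ne)),
    isSquare_iff_exists_sq]
  simp_rw [eq_comm]

/-- A totally positive algebraic d-number `α = 3^a (u₁^b u₂^c)² β^d` (with `a ≥ 0`,
`b, c ∈ ℤ`, `d ∈ {0,1,2}`) is a perfect square in `Q(ζ₉)⁺` iff `a ≡ d (mod 2)`. -/
theorem stmt14 (U1 U2 B : Kplus)
    (hU1 : (U1 : ℂ) = u1) (hU2 : (U2 : ℂ) = u2)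
    (hB : (B : ℂ) = 2 - z9 ^ 4 - z9 ^ 5)
    (a : ℕ) (b c : ℤ) (d : ℕ) (hd : d ≤ 2) :
    (∃ x : Kplus, x ^ 2 = 3 ^ a * (U1 ^ b * U2 ^ c) ^ 2 * B ^ d) ↔ a % 2 = d % 2 :=
  stmt14_general U1 U2 B hU1 hU2 hB a b c d
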